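/- arXiv:2603.21040 — 10 statements merged into one kernel-verified Lean document; each statement's English description precedes it below -/
import Mathlib

section
/- Let a, b be real numbers with 0 < a < b, let f : ℝ → ℝ be continuous and strictly positive on the open interval (a,b), and suppose that for every r ∈ (a,b) the function x ↦ (1/√(f(x)) − 1)/x is interval-integrable on [a,r]. Fix ρ₀ > 0 and define I(r) = ∫_a^r (1/√(f(x)) − 1)/x dx and ρ(r) = ρ₀ · r · exp(I(r)). Then ρ is strictly monotone increasing on (a,b); in particular ρ is injective on (a,b) and admits a unique inverse on its image. -/
open MeasureTheory Set Real

/-- The isotropic radius ρ(r) = ρ₀ · r · exp(I(r)) is strictly monotone increasing on the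
static region (a,b); in particular it is injective there. -/
theorem isotropic_map_strictMonoOn
    (a b : ℝ) (ha : 0 < a) (hab : a < b) (f : ℝ → ℝ)
    (hcont : ContinuousOn f (Set.Ioo a b))
    (hpos : ∀ x ∈ Set.Ioo a b, 0 < f x)
    (hint : ∀ r ∈ Set.Ioo a b,
      IntervalIntegrable (fun x => (1 / Real.sqrt (f x) - 1) / x) volume a r)
    (ρ₀ : ℝ) (hρ₀ : 0 < ρ₀)
    (I : ℝ → ℝ) (hI : ∀ r, I r = ∫ x in a..r, (1 / Real.sqrt (f x) - 1) / x)
    (ρ : ℝ → ℝ) (hρ : ∀ r, ρ r = ρ₀ * r * Real.exp (I r)) :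
    StrictMonoOn ρ (Set.Ioo a b) ∧ Set.InjOn ρ (Set.Ioo a b) := by
  have key : StrictMonoOn ρ (Set.Ioo a b) := by
    intro r₁ hr₁ r₂ hr₂ h12
    have hr₁0 : 0 < r₁ := ha.trans hr₁.1
    have hr₂0 : 0 < r₂ := ha.trans hr₂.1
    have huIcc : Set.uIcc r₁ r₂ = Set.Icc r₁ r₂ := Set.uIcc_of_le h12.le
    have h0not : (0:ℝ) ∉ Set.uIcc r₁ r₂ := by
      rw [huIcc]
      intro hx
      exact absurd hx.1 (not_le.mpr hr₁0)
    have hg : IntervalIntegrable (fun x => (1 / Real.sqrt (f x) - 1) / x) volume r₁ r₂ :=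
      (hint r₁ hr₁).symm.trans (hint r₂ hr₂)
    have hinv : IntervalIntegrable (fun x => 1 / x) volume r₁ r₂ := by
      apply ContinuousOn.intervalIntegrable
      apply ContinuousOn.div continuousOn_const continuousOn_id
      intro x hx
      rw [huIcc] at hx
      exact (hr₁0.trans_le hx.1).ne'
    have hsum : IntervalIntegrable
        (fun x => (1 / Real.sqrt (f x) - 1) / x + 1 / x) volume r₁ r₂ := hg.add hinv
    have hpos' : 0 < ∫ x in r₁..r₂, ((1 / Real.sqrt (f x) - 1) / x + 1 / x) := by
      apply intervalIntegral.intervalIntegral_pos_of_pos_on hsum _ h12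
      intro x hx
      have hxa : x ∈ Set.Ioo a b := ⟨hr₁.1.trans hx.1, hx.2.trans hr₂.2⟩
      have hf : 0 < Real.sqrt (f x) := Real.sqrt_pos.mpr (hpos x hxa)
      have hx0 : 0 < x := ha.trans hxa.1
      have heq : (1 / Real.sqrt (f x) - 1) / x + 1 / x = (1 / Real.sqrt (f x)) / x := by
        field_simp
        ring
      rw [heq]
      positivity
    have hint12 : I r₂ - I r₁ = ∫ x in r₁..r₂, (1 / Real.sqrt (f x) - 1) / x := by
      rw [hI, hI, ← intervalIntegral.integral_add_adjacent_intervals (hint r₁ hr₁) hg]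
      ring
    have hlog : Real.log r₂ - Real.log r₁ = ∫ x in r₁..r₂, 1 / x := by
      rw [integral_one_div h0not, Real.log_div hr₂0.ne' hr₁0.ne']
    have hsum_int : (∫ x in r₁..r₂, ((1 / Real.sqrt (f x) - 1) / x + 1 / x)) =
        (I r₂ - I r₁) + (Real.log r₂ - Real.log r₁) := by
      rw [intervalIntegral.integral_add hg hinv, ← hint12, ← hlog]
    rw [hsum_int] at hpos'
    have hlt : Real.log r₁ + I r₁ < Real.log r₂ + I r₂ := by linarith
    rw [hρ, hρ]
    have e1 : r₁ * Real.exp (I r₁) = Real.exp (Real.log r₁ + I r₁) := by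
      rw [Real.exp_add, Real.exp_log hr₁0]
    have e2 : r₂ * Real.exp (I r₂) = Real.exp (Real.log r₂ + I r₂) := by
      rw [Real.exp_add, Real.exp_log hr₂0]
    rw [mul_assoc, mul_assoc, e1, e2]
    exact mul_lt_mul_of_pos_left (Real.exp_lt_exp.mpr hlt) hρ₀
  exact ⟨key, key.injOn⟩
end

section
/- Let a, r be real numbers with 0 < a < r, let f : ℝ → ℝ be continuous on [a,r] with f(a) = 0 and f(x) > 0 for all x ∈ (a,r], and suppose f is differentiable at a with f'(a) > 0 (i.e., a is a simple zero of f). Then the function x ↦ (1/√(f(x)) − 1)/x is interval-integrable on [a,r]. -/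
open MeasureTheory Set Real

/-- Integrability condition (A3) at a simple (nonextremal) horizon: if f vanishes at a,
is positive on (a,r], continuous on [a,r] and differentiable at a with f'(a) > 0, then
x ↦ (1/√(f x) − 1)/x is interval-integrable on [a,r]. -/
theorem integrable_at_simple_horizon
    (a r : ℝ) (ha : 0 < a) (har : a < r) (f : ℝ → ℝ)
    (hcont : ContinuousOn f (Set.Icc a r)) (hfa : f a = 0)
    (hpos : ∀ x ∈ Set.Ioc a r, 0 < f x)
    (f' : ℝ) (hderiv : HasDerivAt f f' a) (hf' : 0 < f') :
    IntervalIntegrable (fun x => (1 / Real.sqrt (f x) - 1) / x) volume a r := by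
  have hslope := hasDerivAt_iff_tendsto_slope.mp hderiv
  have hev : ∀ᶠ x in nhdsWithin a (Set.Ioi a), f' / 2 < slope f a x := by
    have hmono : nhdsWithin a (Set.Ioi a) ≤ nhdsWithin a {a}ᶜ :=
      nhdsWithin_mono a fun x hx => ne_of_gt hx
    exact (hslope.mono_left hmono).eventually (eventually_gt_nhds (by linarith))
  obtain ⟨u, hu, hsub⟩ := mem_nhdsGT_iff_exists_Ioc_subset.mp hev
  set b := min u r with hbdef
  have hab : a < b := lt_min hu har
  have hbr : b ≤ r := min_le_right u r
  have hkey : ∀ x ∈ Set.Ioc a b, f' / 2 * (x - a) < f x := by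
    intro x hx
    have hx' : x ∈ Set.Ioc a u := ⟨hx.1, hx.2.trans (min_le_left u r)⟩
    have hs := hsub hx'
    simp only [Set.mem_setOf_eq] at hs
    have hxa : 0 < x - a := sub_pos.mpr hx.1
    rw [slope_def_field, hfa, sub_zero] at hs
    calc f' / 2 * (x - a) < f x / (x - a) * (x - a) :=
          mul_lt_mul_of_pos_right hs hxa
      _ = f x := div_mul_cancel₀ _ (ne_of_gt hxa)
  set C := Real.sqrt (2 / f') with hCdef
  have hI1 : IntervalIntegrable (fun x => (1 / Real.sqrt (f x) - 1) / x) volume a b := by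
    rw [intervalIntegrable_iff_integrableOn_Ioc_of_le hab.le]
    have hgint : IntegrableOn (fun x => (C * (x - a) ^ (-(1/2) : ℝ) + 1) / a)
        (Set.Ioc a b) volume := by
      rw [← intervalIntegrable_iff_integrableOn_Ioc_of_le hab.le]
      have h0 : IntervalIntegrable (fun x : ℝ => x ^ (-(1/2) : ℝ)) volume 0 (b - a) :=
        intervalIntegral.intervalIntegrable_rpow' (by norm_num)
      have h1 := h0.comp_sub_right a
      simp only [zero_add, sub_add_cancel] at h1
      exact ((h1.const_mul C).add intervalIntegrable_const).div_const a
    refine hgint.mono' ?_ ?_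
    · have hmf : AEMeasurable f (volume.restrict (Set.Ioc a b)) :=
        (hcont.mono (Set.Ioc_subset_Icc_self.trans (Set.Icc_subset_Icc_right hbr))).aemeasurable
          measurableSet_Ioc
      exact (((aemeasurable_const.div
        (Real.continuous_sqrt.measurable.comp_aemeasurable hmf)).sub
        aemeasurable_const).div aemeasurable_id').aestronglyMeasurable
    · filter_upwards [ae_restrict_mem measurableSet_Ioc] with x hx
      have hxa : 0 < x - a := sub_pos.mpr hx.1
      have hfx : 0 < f x := lt_trans (by positivity) (hkey x hx)
      have hxpos : 0 < x := ha.trans hx.1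
      have hsb : Real.sqrt (f' / 2 * (x - a)) ≤ Real.sqrt (f x) :=
        Real.sqrt_le_sqrt (hkey x hx).le
      have hs0 : 0 < Real.sqrt (f' / 2 * (x - a)) := Real.sqrt_pos.mpr (by positivity)
      have hsfx : 0 < Real.sqrt (f x) := Real.sqrt_pos.mpr hfx
      have h2 : (1 : ℝ) / Real.sqrt (f' / 2 * (x - a)) = C * (x - a) ^ (-(1/2) : ℝ) := by
        rw [Real.sqrt_mul (by positivity : (0:ℝ) ≤ f' / 2), Real.rpow_neg hxa.le,
          ← Real.sqrt_eq_rpow, hCdef, show (2:ℝ) / f' = (f' / 2)⁻¹ by rw [inv_div],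
          Real.sqrt_inv, one_div, mul_inv]
      have hinv : 1 / Real.sqrt (f x) ≤ C * (x - a) ^ (-(1/2) : ℝ) := by
        rw [← h2]
        exact one_div_le_one_div_of_le hs0 hsb
      have habs : |1 / Real.sqrt (f x) - 1| ≤ 1 / Real.sqrt (f x) + 1 := by
        have h1 : 0 ≤ 1 / Real.sqrt (f x) := by positivity
        rw [abs_le]; constructor <;> linarith
      have hCpos : 0 ≤ C * (x - a) ^ (-(1/2) : ℝ) := by
        refine le_trans ?_ hinv; positivity
      calc ‖(1 / Real.sqrt (f x) - 1) / x‖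
          = |1 / Real.sqrt (f x) - 1| / x := by
            rw [Real.norm_eq_abs, abs_div, abs_of_pos hxpos]
        _ ≤ (1 / Real.sqrt (f x) + 1) / x := by
            exact div_le_div_of_nonneg_right habs hxpos.le |>.trans_eq rfl
        _ ≤ (C * (x - a) ^ (-(1/2) : ℝ) + 1) / a := by
            apply div_le_div₀ (by linarith) (by linarith) ha hx.1.le
  have hI2 : IntervalIntegrable (fun x => (1 / Real.sqrt (f x) - 1) / x) volume b r := by
    apply ContinuousOn.intervalIntegrable
    rw [Set.uIcc_of_le hbr]
    have hsub2 : Set.Icc b r ⊆ Set.Icc a r := Set.Icc_subset_Icc_left hab.le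
    apply ContinuousOn.div
    · exact (continuousOn_const.div
        (Real.continuous_sqrt.comp_continuousOn (hcont.mono hsub2))
        (fun x hx => ne_of_gt (Real.sqrt_pos.mpr (hpos x ⟨hab.trans_le hx.1, hx.2⟩)))).sub
        continuousOn_const
    · exact continuousOn_id
    · intro x hx; exact ne_of_gt (ha.trans (hab.trans_le hx.1))
  exact hI1.trans hI2
end

section
/- Fix N ∈ ℕ, a constant r_g ∈ ℝ, amplitudes K : Fin N → ℝ and exponents s : Fin N → ℝ, and set ξ(x) = r_g/x + Σ_{i=1}^{N} K_i · x^{−s_i} for x > 0 (real powers). Let 0 < a ≤ r and assume that |r_g|/x + Σ_{i=1}^{N} |K_i| · x^{−s_i} < 1 for all x ∈ [a,r]. For a multi-index m = (m₀, m₁, …, m_N) ∈ ℕ^{N+1} with m ≠ 0, write |m| = m₀ + m₁ + ⋯ + m_N, C(m) = (2|m|)!/(4^{|m|} (|m|!)²) · |m|!/(m₀! m₁! ⋯ m_N!), and α(m) = m₀ + Σ_{i=1}^{N} m_i s_i, and define the term T(m) = C(m) · r_g^{m₀} · (Π_{i=1}^{N} K_i^{m_i}) · ∫_a^r x^{−1−α(m)}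 dx. Then the family (T(m)) indexed by nonzero multi-indices m is summable, and its sum equals ∫_a^r (1/√(1 − ξ(x)) − 1)/x dx. -/
open MeasureTheory Set Real Finset

/-! Write `ξ(x) = Σ_j u_j(x)` with the `N + 1` summands `u_0 = r_g / x`, `u_{i+1} = K_i x^(-s_i)`.
Inserting the binomial series `1 / √(1 - t) = Σ_k (2k choose k) t^k / 4^k` and expanding each
`ξ(x)^k` by the multinomial theorem gives, for each `x ∈ [a, r]`, a multi-index series for
`(1 / √(1 - ξ(x)) - 1) / x`. Replacing `r_g, K_i` by `|r_g|, |K_i|` turns every term into its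
absolute value, so the hypothesis `|r_g|/x + Σ |K_i| x^(-s_i) < 1` makes the series absolutely
convergent with a sum continuous on `[a, r]`; dominated convergence then integrates term by term. -/

noncomputable def invSqrtCoeff (k : ℕ) : ℝ :=
  ((2 * k).factorial : ℝ) / (4 ^ k * (k.factorial : ℝ) ^ 2)

lemma invSqrtCoeff_nonneg (k : ℕ) : 0 ≤ invSqrtCoeff k := by
  unfold invSqrtCoeff; positivity

@[simp] lemma invSqrtCoeff_zero : invSqrtCoeff 0 = 1 := by simp [invSqrtCoeff]

lemma ascPochhammer_eval_half (k : ℕ) :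
    (ascPochhammer ℝ k).eval (1 / 2) = ((2 * k).factorial : ℝ) / (4 ^ k * k.factorial) := by
  induction k with
  | zero => simp
  | succ k ih =>
    rw [ascPochhammer_succ_eval, ih, show 2 * (k + 1) = 2 * k + 1 + 1 by ring,
      Nat.factorial_succ, Nat.factorial_succ, Nat.factorial_succ]
    push_cast
    field_simp
    ring

lemma invSqrtCoeff_eq_ringChoose (k : ℕ) :
    invSqrtCoeff k = Ring.choose (1 / 2 + k - 1 : ℝ) k := by
  have h := Ring.factorial_nsmul_multichoose_eq_ascPochhammer (1 / 2 : ℝ) k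
  rw [Polynomial.ascPochhammer_smeval_eq_eval, ascPochhammer_eval_half, nsmul_eq_mul] at h
  have hk : (k.factorial : ℝ) ≠ 0 := by positivity
  rw [← Ring.multichoose_eq, invSqrtCoeff, eq_comm, ← mul_right_inj' hk, h]
  field_simp

lemma hasSum_invSqrtCoeff_mul_pow {t : ℝ} (ht : |t| < 1) :
    HasSum (fun k => invSqrtCoeff k * t ^ k) (1 / √(1 - t)) := by
  have h := (Real.one_div_one_sub_rpow_hasFPowerSeriesOnBall_zero (1 / 2)).hasSum
    (y := t) (by simpa [enorm_eq_nnnorm, ← NNReal.coe_lt_one] using ht)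
  simp only [FormalMultilinearSeries.ofScalars_apply_eq, smul_eq_mul, zero_add] at h
  rw [Real.sqrt_eq_rpow]
  simpa only [invSqrtCoeff_eq_ringChoose] using h

lemma hasSum_multinomial_fiber {ι : Type*} [Fintype ι] (u : ι → ℝ) (k : ℕ) :
    HasSum (fun m : {m : ι → ℕ // ∑ j, m j = k} =>
        (Nat.multinomial univ m.1 : ℝ) * ∏ j, u j ^ m.1 j) ((∑ j, u j) ^ k) := by
  classical
  rw [Finset.sum_pow_eq_sum_piAntidiag]
  refine (Equiv.subtypeEquivRight fun m => ?_).hasSum_iff.1 (Finset.hasSum _ _)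
  simp [Finset.mem_piAntidiag]

theorem hasSum_multinomial_of_hasSum_pow {ι : Type*} [Fintype ι] {c : ℕ → ℝ} {u : ι → ℝ}
    {f : ℝ} (hf : HasSum (fun k => c k * (∑ j, u j) ^ k) f)
    (habs : Summable fun k => |c k| * (∑ j, |u j|) ^ k) :
    HasSum (fun m : ι → ℕ => c (∑ j, m j) * (Nat.multinomial univ m * ∏ j, u j ^ m j)) f := by
  set F : (ι → ℕ) → ℝ := fun m => c (∑ j, m j) * (Nat.multinomial univ m * ∏ j, u j ^ m j)
  set σ := Equiv.sigmaFiberEquiv fun m : ι → ℕ => ∑ j, m j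
  have hfiber (k : ℕ) : HasSum (fun m : {m : ι → ℕ // ∑ j, m j = k} => F m)
      (c k * (∑ j, u j) ^ k) := by
    have hF : ∀ m : {m : ι → ℕ // ∑ j, m j = k},
        F m = c k * (Nat.multinomial univ m.1 * ∏ j, u j ^ m.1 j) := fun m => by
      simp only [F, m.2]
    simpa only [hF] using (hasSum_multinomial_fiber u k).mul_left (c k)
  have hfiber_abs (k : ℕ) : HasSum (fun m : {m : ι → ℕ // ∑ j, m j = k} => |F m|)
      (|c k| * (∑ j, |u j|) ^ k) := by
    have hF : ∀ m : {m : ι → ℕ // ∑ j, m j = k},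
        |F m| = |c k| * (Nat.multinomial univ m.1 * ∏ j, |u j| ^ m.1 j) := fun m => by
      simp only [F, m.2, abs_mul, Nat.abs_cast, abs_prod, abs_pow]
    simpa only [hF] using (hasSum_multinomial_fiber (fun j => |u j|) k).mul_left |c k|
  have hsummable : Summable (F ∘ σ) := by
    refine .of_abs ((summable_sigma_of_nonneg fun _ => abs_nonneg _).2
      ⟨fun k => (hfiber_abs k).summable, ?_⟩)
    exact habs.congr fun k => (hfiber_abs k).tsum_eq.symm
  exact σ.hasSum_iff.1 (hf.sigma_of_hasSum hfiber hsummable)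

theorem hasSum_invSqrtCoeff_multinomial {ι : Type*} [Fintype ι] {u : ι → ℝ}
    (hu : ∑ j, |u j| < 1) :
    HasSum (fun m : {m : ι → ℕ // m ≠ 0} =>
        invSqrtCoeff (∑ j, m.1 j) * (Nat.multinomial univ m.1 * ∏ j, u j ^ m.1 j))
      (1 / √(1 - ∑ j, u j) - 1) := by
  have habs_sum : abs (∑ j, |u j|) < 1 := by rwa [abs_of_nonneg (by positivity)]
  have h := hasSum_multinomial_of_hasSum_pow
    (hasSum_invSqrtCoeff_mul_pow ((abs_sum_le_sum_abs _ _).trans_lt hu))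
    (by simpa only [abs_of_nonneg (invSqrtCoeff_nonneg _)]
      using (hasSum_invSqrtCoeff_mul_pow habs_sum).summable)
  have h0 : Nat.multinomial univ (0 : ι → ℕ) = 1 := by simp [Nat.multinomial]
  have h' := (hasSum_singleton (0 : ι → ℕ) _).hasSum_iff_compl.1 h
  simp only [h0, Pi.zero_apply, sum_const_zero, pow_zero, prod_const_one, Nat.cast_one,
    invSqrtCoeff_zero, mul_one] at h'
  exact h'

theorem hasSum_intervalIntegral_of_hasSum_abs {ι : Type*} [Countable ι] {F : ι → ℝ → ℝ}
    {f g : ℝ → ℝ} {a b : ℝ} (hF : ∀ i, ContinuousOn (F i) (uIcc a b))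
    (hg : ContinuousOn g (uIcc a b)) (hf : ∀ x ∈ uIcc a b, HasSum (F · x) (f x))
    (habs : ∀ x ∈ uIcc a b, HasSum (|F · x|) (g x)) :
    HasSum (fun i => ∫ x in a..b, F i x) (∫ x in a..b, f x) := by
  refine intervalIntegral.hasSum_integral_of_dominated_convergence (fun i x => |F i x|)
    (fun i => ((hF i).mono uIoc_subset_uIcc).aestronglyMeasurable measurableSet_uIoc)
    (fun i => ae_of_all _ fun x _ => le_rfl)
    (ae_of_all _ fun x hx => (habs x (uIoc_subset_uIcc hx)).summable) ?_
    (ae_of_all _ fun x hx => hf x (uIoc_subset_uIcc hx))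
  exact (hg.congr fun x hx => (habs x hx).tsum_eq).intervalIntegrable

lemma Nat.cast_multinomial_eq_div {ι 𝕜 : Type*} [Field 𝕜] [CharZero 𝕜] (s : Finset ι)
    (f : ι → ℕ) :
    (Nat.multinomial s f : 𝕜)
      = ((∑ i ∈ s, f i).factorial : 𝕜) / ∏ i ∈ s, ((f i).factorial : 𝕜) := by
  rw [eq_div_iff (prod_ne_zero_iff.2 fun i _ => Nat.cast_ne_zero.2 (Nat.factorial_ne_zero _)),
    mul_comm]
  exact_mod_cast Nat.multinomial_spec s f

section Kiselev

variable {N : ℕ} (r_g : ℝ) (K s : Fin N → ℝ) {x : ℝ}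

noncomputable def kiselevComponents (x : ℝ) : Fin (N + 1) → ℝ :=
  Fin.cons (r_g / x) fun i => K i * x ^ (-(s i))

lemma sum_kiselevComponents :
    ∑ j, kiselevComponents r_g K s x j = r_g / x + ∑ i, K i * x ^ (-(s i)) := by
  simp [kiselevComponents, Fin.sum_univ_succ]

lemma abs_kiselevComponents (hx : 0 < x) (j : Fin (N + 1)) :
    |kiselevComponents r_g K s x j| = kiselevComponents |r_g| (fun i => |K i|) s x j := by
  refine Fin.cases ?_ (fun i => ?_) j <;>
    simp [kiselevComponents, abs_div, abs_mul, abs_of_pos hx, abs_of_pos (rpow_pos_of_pos hx _)]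

lemma prod_kiselevComponents_pow_div (hx : 0 < x) (m : Fin (N + 1) → ℕ) :
    (∏ j, kiselevComponents r_g K s x j ^ m j) / x
      = r_g ^ m 0 * (∏ i, K i ^ m i.succ)
        * x ^ (-1 - ((m 0 : ℝ) + ∑ i, (m i.succ : ℝ) * s i)) := by
  have hpow (i : Fin N) :
      (K i * x ^ (-(s i))) ^ m i.succ = K i ^ m i.succ * x ^ (-(s i) * m i.succ) := by
    rw [mul_pow, ← rpow_natCast (x ^ _), ← rpow_mul hx.le]
  have hexp : -1 - ((m 0 : ℝ) + ∑ i, (m i.succ : ℝ) * s i)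
      = -(1 + m 0 : ℝ) + ∑ i, -(s i) * m i.succ := by
    simp only [neg_mul, sum_neg_distrib, mul_comm (s _)]
    ring
  simp only [kiselevComponents, Fin.prod_univ_succ, Fin.cons_zero, Fin.cons_succ, hpow,
    prod_mul_distrib]
  rw [hexp, rpow_add hx, rpow_sum_of_pos hx, rpow_neg hx.le, rpow_add hx, rpow_one, rpow_natCast,
    div_pow]
  field_simp

noncomputable def kiselevTerm (m : Fin (N + 1) → ℕ) (x : ℝ) : ℝ :=
  invSqrtCoeff (∑ j, m j) * (Nat.multinomial univ m * ∏ j, kiselevComponents r_g K s x j ^ m j) / x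

lemma kiselevTerm_eq (m : Fin (N + 1) → ℕ) (hx : 0 < x) :
    kiselevTerm r_g K s m x
      = (invSqrtCoeff (∑ j, m j) * Nat.multinomial univ m * r_g ^ m 0 * ∏ i, K i ^ m i.succ)
        * x ^ (-1 - ((m 0 : ℝ) + ∑ i, (m i.succ : ℝ) * s i)) := by
  rw [kiselevTerm, mul_div_assoc, mul_div_assoc, prod_kiselevComponents_pow_div _ _ _ hx]
  ring

lemma continuousOn_kiselevTerm (m : Fin (N + 1) → ℕ) :
    ContinuousOn (kiselevTerm r_g K s m) (Ioi 0) :=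
  (continuousOn_const.mul (continuousOn_id.rpow_const fun _ hx => Or.inl (ne_of_gt hx))).congr
    fun _ hx => kiselevTerm_eq r_g K s m hx

lemma abs_kiselevTerm (m : Fin (N + 1) → ℕ) (hx : 0 < x) :
    |kiselevTerm r_g K s m x| = kiselevTerm |r_g| (fun i => |K i|) s m x := by
  simp only [kiselevTerm, abs_div, abs_mul, abs_of_pos hx, abs_of_nonneg (invSqrtCoeff_nonneg _),
    Nat.abs_cast, abs_prod, abs_pow, abs_kiselevComponents r_g K s hx]

lemma hasSum_kiselevTerm (hx : 0 < x) (hsmall : |r_g| / x + ∑ i, |K i| * x ^ (-(s i)) < 1) :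
    HasSum (fun m : {m : Fin (N + 1) → ℕ // m ≠ 0} => kiselevTerm r_g K s m x)
      ((1 / √(1 - (r_g / x + ∑ i, K i * x ^ (-(s i)))) - 1) / x) := by
  rw [← sum_kiselevComponents]
  refine (hasSum_invSqrtCoeff_multinomial ?_).div_const x
  simpa only [abs_kiselevComponents r_g K s hx, sum_kiselevComponents] using hsmall

lemma continuousOn_kiselevIntegrand {S : Set ℝ} (hS : S ⊆ Ioi 0)
    (h : ∀ x ∈ S, r_g / x + ∑ i, K i * x ^ (-(s i)) < 1) :
    ContinuousOn (fun x => (1 / √(1 - (r_g / x + ∑ i, K i * x ^ (-(s i)))) - 1) / x) S := by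
  have hpos : ∀ x ∈ S, x ≠ 0 := fun x hx => ne_of_gt (hS hx)
  have hξ : ContinuousOn (fun x => r_g / x + ∑ i, K i * x ^ (-(s i))) S :=
    (continuousOn_const.div continuousOn_id hpos).add <| continuousOn_finsetSum _ fun i _ =>
      continuousOn_const.mul (continuousOn_id.rpow_const fun x hx => Or.inl (hpos x hx))
  refine ((continuousOn_const.div (continuous_sqrt.comp_continuousOn
    (continuousOn_const.sub hξ)) fun x hx => ?_).sub continuousOn_const).div continuousOn_id hpos
  exact (sqrt_pos.2 (sub_pos.2 (h x hx))).ne'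

end Kiselev

/-- Multi-index expansion of the isotropic-map integral for a generalized
Kiselev-type metric function f(x) = 1 − ξ(x) with ξ(x) = r_g/x + Σᵢ Kᵢ x^{−sᵢ}:
the family of multi-index terms T(m), m ≠ 0, is summable with sum
∫_a^r (1/√(1 − ξ(x)) − 1)/x dx, provided |r_g|/x + Σᵢ |Kᵢ| x^{−sᵢ} < 1 on [a,r]. -/
theorem kiselev_multiindex_expansion
    (N : ℕ) (r_g : ℝ) (K s : Fin N → ℝ)
    (ξ : ℝ → ℝ)
    (hξ : ∀ x : ℝ, ξ x = r_g / x + ∑ i : Fin N, K i * x ^ (-(s i)))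
    (a r : ℝ) (ha : 0 < a) (har : a ≤ r)
    (hsmall : ∀ x ∈ Set.Icc a r,
      |r_g| / x + ∑ i : Fin N, |K i| * x ^ (-(s i)) < 1)
    (T : (Fin (N + 1) → ℕ) → ℝ)
    (hT : ∀ m : Fin (N + 1) → ℕ,
      T m = (((2 * ∑ j, m j).factorial : ℝ) /
              (4 ^ (∑ j, m j) * (((∑ j, m j).factorial : ℝ)) ^ 2))
            * (((∑ j, m j).factorial : ℝ) / ∏ j, ((m j).factorial : ℝ))
            * r_g ^ (m 0) * (∏ i : Fin N, K i ^ (m i.succ))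
            * ∫ x in a..r,
                x ^ (-1 - ((m 0 : ℝ) + ∑ i : Fin N, (m i.succ : ℝ) * s i))) :
    HasSum (fun m : {m : Fin (N + 1) → ℕ // m ≠ 0} => T m.1)
      (∫ x in a..r, (1 / Real.sqrt (1 - ξ x) - 1) / x) := by
  have hI : uIcc a r = Icc a r := uIcc_of_le har
  have hpos : uIcc a r ⊆ Ioi 0 := fun x hx => ha.trans_le (hI ▸ hx).1
  have hsmall' : ∀ x ∈ uIcc a r, |r_g| / x + ∑ i, |K i| * x ^ (-(s i)) < 1 :=
    fun x hx => hsmall x (hI ▸ hx)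
  have hT' (m : {m : Fin (N + 1) → ℕ // m ≠ 0}) :
      T m.1 = ∫ x in a..r, kiselevTerm r_g K s m.1 x := by
    rw [hT, intervalIntegral.integral_congr fun x hx => kiselevTerm_eq r_g K s m.1 (hpos hx),
      intervalIntegral.integral_const_mul, Nat.cast_multinomial_eq_div, invSqrtCoeff]
  simp only [hT', hξ]
  refine hasSum_intervalIntegral_of_hasSum_abs
    (fun m => (continuousOn_kiselevTerm r_g K s m.1).mono hpos)
    (continuousOn_kiselevIntegrand |r_g| (fun i => |K i|) s hpos hsmall')
    (fun x hx => hasSum_kiselevTerm r_g K s (hpos hx) (hsmall' x hx)) fun x hx => ?_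
  simpa only [abs_kiselevTerm r_g K s _ (hpos hx)] using hasSum_kiselevTerm |r_g| (fun i => |K i|)
    s (hpos hx) (by simpa only [abs_abs] using hsmall' x hx)
end

section
/- For every real t with −1 < t < 1, the series Σ_{k=1}^{∞} (2k choose k) · t^k/(4^k · k) converges and its sum equals −2·ln((1 + √(1 − t))/2). -/
/-!
Since `(n - 1/2 choose n) = (2n choose n) / 4^n`, the binomial series for `(1 - x)^(-1/2)`
gives `∑ C_n x^n = 1 / √(1 - x)` on `(-1, 1)`. Differentiating `S` termwise therefore yields
`(1 / √(1 - x) - 1) / x = 1 / (√(1 - x) (1 + √(1 - x)))`, which is also the derivative of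
`-2 log ((1 + √(1 - x)) / 2)`; both functions vanish at `0`.
-/

open Real
open scoped Nat

noncomputable def normalizedCentralBinom (n : ℕ) : ℝ := Nat.centralBinom n / 4 ^ n

lemma normalizedCentralBinom_nonneg (n : ℕ) : 0 ≤ normalizedCentralBinom n := by
  unfold normalizedCentralBinom; positivity

lemma normalizedCentralBinom_le_one (n : ℕ) : normalizedCentralBinom n ≤ 1 := by
  rw [normalizedCentralBinom, div_le_one (by positivity)]
  exact_mod_cast Nat.centralBinom_le_four_pow n

lemma ascPochhammer_eval_half_s4 (n : ℕ) :
    (ascPochhammer ℝ n).eval (1 / 2) = n ! * normalizedCentralBinom n := by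
  induction n with
  | zero => simp [normalizedCentralBinom]
  | succ n ih =>
    have h : ((n : ℝ) + 1) * Nat.centralBinom (n + 1) = 2 * (2 * n + 1) * Nat.centralBinom n := by
      exact_mod_cast Nat.succ_mul_centralBinom_succ n
    rw [ascPochhammer_succ_eval, ih, normalizedCentralBinom, normalizedCentralBinom,
      Nat.factorial_succ, pow_succ]
    push_cast
    linear_combination (-(n ! : ℝ) / (4 ^ n * 4)) * h

lemma ringChoose_half_add_sub_one (n : ℕ) :
    Ring.choose (1 / 2 + n - 1 : ℝ) n = normalizedCentralBinom n := by
  have h := Ring.factorial_nsmul_multichoose_eq_ascPochhammer (1 / 2 : ℝ) n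
  rw [Polynomial.ascPochhammer_smeval_eq_eval, ascPochhammer_eval_half_s4, nsmul_eq_mul] at h
  rw [← Ring.multichoose_eq]
  exact mul_left_cancel₀ (by positivity) h

theorem hasSum_normalizedCentralBinom_mul_pow {x : ℝ} (hx : |x| < 1) :
    HasSum (fun n => normalizedCentralBinom n * x ^ n) (√(1 - x))⁻¹ := by
  have h := (one_div_one_sub_rpow_hasFPowerSeriesOnBall_zero (1 / 2)).hasSum
    (y := x) (by simpa [enorm_eq_nnnorm, ← NNReal.coe_lt_one] using hx)
  simp only [FormalMultilinearSeries.ofScalars_apply_eq', ringChoose_half_add_sub_one, smul_eq_mul,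
    zero_add, ← Real.sqrt_eq_rpow] at h
  simpa only [mul_comm, one_div] using h

section BoundedCoefficients

variable {a : ℕ → ℝ} {C : ℝ}

theorem summable_mul_pow_succ_div_of_abs_le (ha : ∀ n, |a n| ≤ C) {x : ℝ} (hx : |x| < 1) :
    Summable fun n => a n * x ^ (n + 1) / (n + 1) := by
  have hgeom := (summable_nat_add_iff 1).2 (summable_geometric_of_lt_one (abs_nonneg x) hx)
  refine .of_norm_bounded (hgeom.mul_left C) fun n => ?_
  rw [norm_div, norm_mul, norm_pow, Real.norm_eq_abs, Real.norm_eq_abs,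
    Real.norm_of_nonneg (by positivity)]
  calc |a n| * |x| ^ (n + 1) / (n + 1) ≤ |a n| * |x| ^ (n + 1) :=
        div_le_self (by positivity) (by simp)
    _ ≤ C * |x| ^ (n + 1) := by gcongr; exact ha n

theorem hasDerivAt_tsum_mul_pow_succ_div (ha : ∀ n, |a n| ≤ C) {x : ℝ} (hx : |x| < 1) :
    HasDerivAt (fun y => ∑' n, a n * y ^ (n + 1) / (n + 1)) (∑' n, a n * x ^ n) x := by
  obtain ⟨r, hxr, hr1⟩ := exists_between hx
  have hr : 0 < r := (abs_nonneg x).trans_lt hxr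
  refine hasDerivAt_tsum_of_isPreconnected (g := fun n y => a n * y ^ (n + 1) / (n + 1))
    (g' := fun n y => a n * y ^ n) (t := Set.Ioo (-r) r) (y₀ := 0)
    ((summable_geometric_of_lt_one hr.le hr1).mul_left C) isOpen_Ioo
    isPreconnected_Ioo (fun n y _ => ?_) (fun n y hy => ?_) ?_ ?_ (abs_lt.1 hxr)
  · refine (((hasDerivAt_pow (n + 1) y).const_mul (a n)).div_const ((n : ℝ) + 1)).congr_deriv ?_
    push_cast
    field_simp
  · rw [norm_mul, norm_pow, Real.norm_eq_abs, Real.norm_eq_abs]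
    gcongr
    · exact (abs_nonneg _).trans (ha 0)
    · exact ha n
    · exact (abs_lt.2 hy).le
  · exact ⟨neg_lt_zero.2 hr, hr⟩
  · simp

end BoundedCoefficients

theorem hasDerivAt_neg_two_mul_log_one_add_sqrt_one_sub_div_two {x : ℝ} (hx : x < 1) :
    HasDerivAt (fun y => -2 * log ((1 + √(1 - y)) / 2)) (√(1 - x) * (1 + √(1 - x)))⁻¹ x := by
  have hs : 0 < √(1 - x) := Real.sqrt_pos.2 (by linarith)
  have hsqrt : HasDerivAt (fun y => √(1 - y)) (-1 / (2 * √(1 - x))) x := by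
    simpa using ((hasDerivAt_id x).const_sub 1).sqrt (sub_ne_zero.2 hx.ne')
  refine ((((hsqrt.const_add 1).div_const 2).log (by positivity)).const_mul (-2)).congr_deriv ?_
  field_simp

theorem hasSum_normalizedCentralBinom_succ_mul_pow {x : ℝ} (hx : |x| < 1) :
    HasSum (fun n => normalizedCentralBinom (n + 1) * x ^ n) (√(1 - x) * (1 + √(1 - x)))⁻¹ := by
  rcases eq_or_ne x 0 with rfl | hx0
  · convert hasSum_single (f := fun n => normalizedCentralBinom (n + 1) * (0 : ℝ) ^ n) 0
      (fun n hn => by simp [hn]) using 1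
    norm_num [normalizedCentralBinom, Nat.centralBinom]
  have hs : 0 < √(1 - x) := Real.sqrt_pos.2 (by linarith [(abs_lt.1 hx).2])
  have hsq : √(1 - x) ^ 2 = 1 - x := Real.sq_sqrt (by linarith [(abs_lt.1 hx).2])
  have htail : HasSum (fun n => normalizedCentralBinom (n + 1) * x ^ (n + 1))
      ((√(1 - x))⁻¹ - 1) := by
    simpa [normalizedCentralBinom] using
      (hasSum_nat_add_iff' 1).2 (hasSum_normalizedCentralBinom_mul_pow hx)
  have hval : ((√(1 - x))⁻¹ - 1) / x = (√(1 - x) * (1 + √(1 - x)))⁻¹ := by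
    have : 1 + √(1 - x) ≠ 0 := by positivity
    field_simp
    linear_combination -hsq
  rw [← hval]
  simpa only [pow_succ, ← mul_assoc, mul_div_cancel_right₀ _ hx0] using htail.div_const x

theorem hasSum_normalizedCentralBinom_succ_mul_pow_succ_div {x : ℝ} (hx : |x| < 1) :
    HasSum (fun n => normalizedCentralBinom (n + 1) * x ^ (n + 1) / (n + 1))
      (-2 * log ((1 + √(1 - x)) / 2)) := by
  have hbound (n : ℕ) : |normalizedCentralBinom (n + 1)| ≤ 1 := by
    rw [abs_of_nonneg (normalizedCentralBinom_nonneg _)]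
    exact normalizedCentralBinom_le_one _
  set F := fun y => ∑' n, normalizedCentralBinom (n + 1) * y ^ (n + 1) / (n + 1)
  set G := fun y => -2 * log ((1 + √(1 - y)) / 2)
  have hF (y : ℝ) (hy : y ∈ Set.Ioo (-1) 1) :
      HasDerivAt F (√(1 - y) * (1 + √(1 - y)))⁻¹ y := by
    rw [← (hasSum_normalizedCentralBinom_succ_mul_pow (abs_lt.2 hy)).tsum_eq]
    exact hasDerivAt_tsum_mul_pow_succ_div hbound (abs_lt.2 hy)
  have hG (y : ℝ) (hy : y ∈ Set.Ioo (-1) 1) : HasDerivAt G (√(1 - y) * (1 + √(1 - y)))⁻¹ y :=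
    hasDerivAt_neg_two_mul_log_one_add_sqrt_one_sub_div_two hy.2
  have hFG : Set.EqOn F G (Set.Ioo (-1) 1) :=
    isOpen_Ioo.eqOn_of_deriv_eq (x := 0) isPreconnected_Ioo
      (fun y hy => (hF y hy).differentiableAt.differentiableWithinAt)
      (fun y hy => (hG y hy).differentiableAt.differentiableWithinAt)
      (fun y hy => (hF y hy).deriv.trans (hG y hy).deriv.symm) (by norm_num) (by simp [F, G])
  convert (summable_mul_pow_succ_div_of_abs_le hbound hx).hasSum
  exact (hFG (abs_lt.1 hx)).symm

/-- For −1 < t < 1, Σ_{k≥1} (2k choose k) t^k/(4^k k) = −2 ln((1 + √(1−t))/2). -/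
theorem central_binomial_log_series (t : ℝ) (h1 : -1 < t) (h2 : t < 1) :
    HasSum (fun k : ℕ =>
        (Nat.choose (2 * (k + 1)) (k + 1) : ℝ) * t ^ (k + 1) / (4 ^ (k + 1) * (k + 1)))
      (-2 * Real.log ((1 + Real.sqrt (1 - t)) / 2)) := by
  have hterm (k : ℕ) :
      (Nat.choose (2 * (k + 1)) (k + 1) : ℝ) * t ^ (k + 1) / (4 ^ (k + 1) * (k + 1))
        = normalizedCentralBinom (k + 1) * t ^ (k + 1) / (k + 1) := by
    rw [normalizedCentralBinom, Nat.centralBinom_eq_two_mul_choose]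
    field_simp
  simpa only [hterm] using hasSum_normalizedCentralBinom_succ_mul_pow_succ_div (abs_lt.2 ⟨h1, h2⟩)
end

section
/- The series Σ_{k=1}^{∞} (2k choose k)/(4^k · k) converges and its sum equals 2·ln 2. -/
/-!
Wallis' formula writes `C_k = (2k choose k) / 4^k` as `(2/π) ∫₀^{π/2} cos^{2k} x dx`. Summing
under the integral, `∑_{k ≥ 1} cos^{2k} x / k = -log (1 - cos² x) = -2 log (sin x)`, which is
legitimate because all terms are nonnegative, and `∫₀^{π/2} log (sin x) dx = -(π/2) log 2`.
-/

open Real Finset MeasureTheory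

theorem hasSum_integral_of_nonneg {α ι : Type*} [MeasurableSpace α] [Countable ι]
    {μ : Measure α} {F : ι → α → ℝ} {f : α → ℝ}
    (hF_meas : ∀ i, AEStronglyMeasurable (F i) μ) (hF_nonneg : ∀ i, ∀ᵐ a ∂μ, 0 ≤ F i a)
    (hf : Integrable f μ) (h_lim : ∀ᵐ a ∂μ, HasSum (fun i => F i a) (f a)) :
    HasSum (fun i => ∫ a, F i a ∂μ) (∫ a, f a ∂μ) :=
  hasSum_integral_of_dominated_convergence F hF_meas
    (fun i => (hF_nonneg i).mono fun _ h => (Real.norm_of_nonneg h).le)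
    (h_lim.mono fun _ h => h.summable) (hf.congr (h_lim.mono fun _ h => h.tsum_eq.symm)) h_lim

theorem centralBinom_div_four_pow_eq_prod (n : ℕ) :
    (n.centralBinom : ℝ) / 4 ^ n = ∏ i ∈ range n, (2 * (i : ℝ) + 1) / (2 * i + 2) := by
  induction n with
  | zero => simp
  | succ n ih =>
    have hrec : ((n : ℝ) + 1) * (n + 1).centralBinom = 2 * (2 * n + 1) * n.centralBinom := by
      exact_mod_cast Nat.succ_mul_centralBinom_succ n
    rw [prod_range_succ, ← ih]
    field_simp
    linear_combination 2 * 4 ^ n * hrec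

theorem integral_cos_pow_two_mul (n : ℕ) :
    ∫ x in 0..π / 2, cos x ^ (2 * n) = π / 2 * (n.centralBinom / 4 ^ n) := by
  rw [EulerSine.integral_cos_pow_eq, integral_sin_pow_even, centralBinom_div_four_pow_eq_prod]
  ring

theorem hasSum_cos_pow_two_mul_div {x : ℝ} (hx : sin x ≠ 0) :
    HasSum (fun k : ℕ => cos x ^ (2 * (k + 1)) / (k + 1)) (-2 * log (sin x)) := by
  have hcos : |cos x ^ 2| < 1 := by
    have : 0 < sin x ^ 2 := by positivity
    rw [abs_of_nonneg (sq_nonneg _)]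
    linarith [sin_sq_add_cos_sq x]
  have h := hasSum_pow_div_log_of_abs_lt_one hcos
  simp only [← pow_mul] at h
  rwa [← sin_sq, log_pow, Nat.cast_ofNat, neg_mul_eq_neg_mul] at h

theorem hasSum_integral_cos_pow_two_mul_div :
    HasSum (fun k : ℕ => ∫ x in 0..π / 2, cos x ^ (2 * (k + 1)) / (k + 1)) (π * log 2) := by
  have h := hasSum_integral_of_nonneg (μ := volume.restrict (Set.Ioc 0 (π / 2)))
    (F := fun (k : ℕ) x => cos x ^ (2 * (k + 1)) / (k + 1)) (f := fun x => -2 * log (sin x))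
    (fun k => by fun_prop)
    (fun k => .of_forall fun x => div_nonneg ((even_two_mul _).pow_nonneg _) (by positivity))
    ((intervalIntegrable_log_sin (a := 0) (b := π / 2)).1.const_mul (-2))
    ((ae_restrict_mem measurableSet_Ioc).mono fun x hx =>
      hasSum_cos_pow_two_mul_div (sin_pos_of_pos_of_lt_pi hx.1 (by linarith [hx.2, pi_pos])).ne')
  simp only [← intervalIntegral.integral_of_le (by positivity : 0 ≤ π / 2),
    intervalIntegral.integral_const_mul, integral_log_sin_zero_pi_div_two] at h
  rwa [show -2 * (-log 2 * π / 2) = π * log 2 by ring] at h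

/-- Σ_{k≥1} (2k choose k)/(4^k k) = 2 ln 2. -/
theorem central_binomial_log_series_at_one :
    HasSum (fun k : ℕ =>
        (Nat.choose (2 * (k + 1)) (k + 1) : ℝ) / (4 ^ (k + 1) * (k + 1)))
      (2 * Real.log 2) := by
  have h := hasSum_integral_cos_pow_two_mul_div
  simp only [intervalIntegral.integral_div, integral_cos_pow_two_mul] at h
  have hterm : (fun k : ℕ => (Nat.choose (2 * (k + 1)) (k + 1) : ℝ) / (4 ^ (k + 1) * (k + 1))) =
      fun k : ℕ => π / 2 * ((k + 1).centralBinom / 4 ^ (k + 1)) / (k + 1) / (π / 2) := by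
    funext k
    rw [Nat.centralBinom_eq_two_mul_choose]
    field_simp
  rw [hterm, show 2 * log 2 = π * log 2 / (π / 2) by field_simp]
  exact h.div_const _
end

section
/- Let r_g and r be real numbers with 0 < r_g < r. Then ∫_{r_g}^{r} (1/√(1 − r_g/x) − 1)/x dx = 2·ln(1 + √(1 − r_g/r)). -/
/-!
The integrand is the derivative of `2 log (1 + √(1 - r_g / x))`, which vanishes at `x = r_g`.
The integrand blows up like `(x - r_g)^(-1/2)` at `r_g`, but it is nonnegative, and a nonnegative
derivative of a function continuous on the closed interval is automatically integrable.
-/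

open MeasureTheory Real Set

lemma hasDerivAt_two_mul_log_one_add_sqrt_one_sub_div {a x : ℝ} (hx : x ≠ 0)
    (hw : 0 < 1 - a / x) :
    HasDerivAt (fun y ↦ 2 * log (1 + √(1 - a / y))) ((1 / √(1 - a / x) - 1) / x) x := by
  set u := √(1 - a / x)
  have hu : 0 < u := sqrt_pos.2 hw
  have hu_sq : u ^ 2 = 1 - a / x := sq_sqrt hw.le
  have hinner : HasDerivAt (fun y ↦ 1 - a / y) (a / x ^ 2) x := by
    simpa [div_eq_mul_inv] using ((hasDerivAt_inv hx).const_mul a).const_sub 1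
  have hlog := (((hinner.sqrt hw.ne').const_add 1).log (by positivity)).const_mul 2
  refine hlog.congr_deriv ?_
  have ha : a = (1 - u ^ 2) * x := by rw [hu_sq]; field_simp; ring
  change 2 * (a / x ^ 2 / (2 * u) / (1 + u)) = (1 / u - 1) / x
  rw [ha]
  field_simp
  ring

lemma continuousOn_two_mul_log_one_add_sqrt_one_sub_div {a : ℝ} {s : Set ℝ}
    (hs : ∀ y ∈ s, y ≠ 0) :
    ContinuousOn (fun y ↦ 2 * log (1 + √(1 - a / y))) s := by
  refine continuousOn_const.mul (ContinuousOn.log ?_ fun y _ ↦ by positivity)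
  exact continuousOn_const.add
    (continuousOn_const.sub (continuousOn_const.div continuousOn_id hs)).sqrt

lemma one_div_sqrt_one_sub_div_sub_one_div_nonneg {a x : ℝ} (ha : 0 ≤ a) (hax : a < x) :
    0 ≤ (1 / √(1 - a / x) - 1) / x := by
  have hx : 0 < x := ha.trans_lt hax
  have hw : 0 < 1 - a / x := sub_pos.2 ((div_lt_one hx).2 hax)
  have hsqrt_le : √(1 - a / x) ≤ 1 :=
    sqrt_le_one.2 (sub_le_self _ (div_nonneg ha hx.le))
  have hone_le : 1 ≤ 1 / √(1 - a / x) := (one_le_div (sqrt_pos.2 hw)).2 hsqrt_le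
  exact div_nonneg (sub_nonneg.2 hone_le) hx.le

/-- The Schwarzschild isotropic-map integral in closed form:
∫_{r_g}^{r} (1/√(1 − r_g/x) − 1)/x dx = 2 ln(1 + √(1 − r_g/r)). -/
theorem schwarzschild_isotropic_integral (r_g r : ℝ) (h0 : 0 < r_g) (h : r_g < r) :
    ∫ x in r_g..r, (1 / Real.sqrt (1 - r_g / x) - 1) / x
      = 2 * Real.log (1 + Real.sqrt (1 - r_g / r)) := by
  have hcont := continuousOn_two_mul_log_one_add_sqrt_one_sub_div (a := r_g) (s := Icc r_g r)
    fun y hy ↦ (h0.trans_le hy.1).ne'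
  have hderiv : ∀ x ∈ Ioo r_g r, HasDerivAt (fun y ↦ 2 * log (1 + √(1 - r_g / y)))
      ((1 / √(1 - r_g / x) - 1) / x) x := fun x hx ↦
    have hx0 : 0 < x := h0.trans hx.1
    hasDerivAt_two_mul_log_one_add_sqrt_one_sub_div hx0.ne' (sub_pos.2 ((div_lt_one hx0).2 hx.1))
  have hint : IntervalIntegrable (fun x ↦ (1 / √(1 - r_g / x) - 1) / x) volume r_g r :=
    (intervalIntegrable_iff_integrableOn_Ioc_of_le h.le).2 <|
      intervalIntegral.integrableOn_deriv_of_nonneg hcont hderiv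
        fun x hx ↦ one_div_sqrt_one_sub_div_sub_one_div_nonneg h0.le hx.1
  rw [intervalIntegral.integral_eq_sub_of_hasDerivAt_of_le h.le hcont hderiv hint,
    div_self h0.ne']
  simp
end

section
/- Let r_g > 0 and Q be real with 0 < Q² < r_g²/4, set r₊ = (r_g + √(r_g² − 4Q²))/2, and for r > r₊ define ρ = (1/2)·(r − r_g/2 + √(r² − r_g·r + Q²)). Then ρ > 0 and r = ρ·(1 + r_g/(2ρ) + (r_g² − 4Q²)/(16ρ²)). -/
open Real

/-- Explicit inversion of the Reissner–Nordström isotropic map: for r > rPlus and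
ρ = (1/2)(r − r_g/2 + √(r² − r_g r + Q²)), one has ρ > 0 and
r = ρ(1 + r_g/(2ρ) + (r_g² − 4Q²)/(16ρ²)). -/
theorem rn_isotropic_inverse
    (r_g Q : ℝ) (hrg : 0 < r_g) (hQ0 : 0 < Q ^ 2) (hQ : Q ^ 2 < r_g ^ 2 / 4)
    (rPlus : ℝ) (hrPlus : rPlus = (r_g + Real.sqrt (r_g ^ 2 - 4 * Q ^ 2)) / 2)
    (r : ℝ) (hr : rPlus < r)
    (ρ : ℝ) (hρ : ρ = (1 / 2) * (r - r_g / 2 + Real.sqrt (r ^ 2 - r_g * r + Q ^ 2))) :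
    0 < ρ ∧ r = ρ * (1 + r_g / (2 * ρ) + (r_g ^ 2 - 4 * Q ^ 2) / (16 * ρ ^ 2)) := by
  set t := Real.sqrt (r_g ^ 2 - 4 * Q ^ 2) with ht
  have htnn : 0 ≤ t := Real.sqrt_nonneg _
  have ht2 : t ^ 2 = r_g ^ 2 - 4 * Q ^ 2 := by
    rw [ht, sq_sqrt]; nlinarith
  have hrbig : (r_g + t) / 2 < r := by rw [← hrPlus]; exact hr
  have hD : 0 < r ^ 2 - r_g * r + Q ^ 2 := by nlinarith
  set s := Real.sqrt (r ^ 2 - r_g * r + Q ^ 2) with hs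
  have hsnn : 0 ≤ s := Real.sqrt_nonneg _
  have hs2 : s ^ 2 = r ^ 2 - r_g * r + Q ^ 2 := by
    rw [hs, sq_sqrt hD.le]
  have hρpos : 0 < ρ := by
    rw [hρ]; nlinarith
  refine ⟨hρpos, ?_⟩
  have hkey : 16 * ρ * r = 16 * ρ ^ 2 + 8 * r_g * ρ + (r_g ^ 2 - 4 * Q ^ 2) := by
    have h2ρ : 2 * ρ - r + r_g / 2 = s := by rw [hρ]; ring
    nlinarith [hs2, h2ρ]
  field_simp
  nlinarith [hkey, sq_nonneg ρ]
end

section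
/- Let a, b be real numbers with 0 < a < b, let f : ℝ → ℝ be continuous on [a,b) and strictly positive on (a,b), with f(a) = 0, and suppose f is differentiable at a with f'(a) > 0. Fix ρ₀ > 0, define I(r) = ∫_a^r (1/√(f(x)) − 1)/x dx and ρ(r) = ρ₀·r·exp(I(r)) for r ∈ (a,b), and set ρ₊ = ρ₀·a. Then, as r → a from the right, ln(ρ(r)/ρ₊)/√(r − a) tends to γ := 2/(a·√(f'(a))). -/
/-!
Write `log (ρ r / ρ₊) = log (r / a) + I r`. The first term is differentiable at `a` and vanishes
there, so it is `O(r - a) = o(√(r - a))`. For the second, `f(x) ≈ f'(a) (x - a)` makes the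
integrand of `I` behave like `1 / (a √(f'(a)) √(x - a))`; this is integrable at `a`, and
L'Hôpital's rule applied to `I r / √(r - a)` turns that asymptotic into the limit `γ`.
-/

open MeasureTheory Set Real Filter Topology

lemma tendsto_sqrt_sub_nhdsGT (a : ℝ) : Tendsto (fun r => √(r - a)) (𝓝[>] a) (𝓝 0) :=
  ((continuous_sqrt.comp (continuous_sub_right a)).tendsto' a 0 (by simp)).mono_left
    nhdsWithin_le_nhds

lemma HasDerivAt.tendsto_slope_nhdsGT {f : ℝ → ℝ} {f' a : ℝ} (h : HasDerivAt f f' a) :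
    Tendsto (slope f a) (𝓝[>] a) (𝓝 f') :=
  (hasDerivWithinAt_iff_tendsto_slope' (s := Ioi a) (lt_irrefl a)).1 h.hasDerivWithinAt

lemma tendsto_div_sqrt_sub_of_differentiableAt {h : ℝ → ℝ} {a : ℝ}
    (hh : DifferentiableAt ℝ h a) (ha : h a = 0) :
    Tendsto (fun r => h r / √(r - a)) (𝓝[>] a) (𝓝 0) := by
  have key := hh.hasDerivAt.tendsto_slope_nhdsGT.mul (tendsto_sqrt_sub_nhdsGT a)
  rw [mul_zero] at key
  refine key.congr' ?_
  filter_upwards [self_mem_nhdsWithin] with r hr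
  have hra : 0 < r - a := sub_pos.2 hr
  have hsqrt : √(r - a) ≠ 0 := (sqrt_pos.2 hra).ne'
  rw [slope_def_field, ha, sub_zero]
  field_simp
  rw [sq_sqrt hra.le]

lemma intervalIntegrable_of_abs_mul_sqrt_sub_le {g : ℝ → ℝ} {a c C : ℝ} (hac : a ≤ c)
    (hg : ContinuousOn g (Ioc a c)) (hC : ∀ x ∈ Ioc a c, |g x| * √(x - a) ≤ C) :
    IntervalIntegrable g volume a c := by
  have hdom : IntervalIntegrable (fun x => C * (x - a) ^ (-(1 / 2) : ℝ)) volume a c := by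
    have := (intervalIntegral.intervalIntegrable_rpow' (a := a - a) (b := c - a)
      (r := -(1 / 2)) (by norm_num)).comp_sub_right a
    simpa using this.const_mul C
  refine hdom.mono_fun' ?_ ?_ <;> rw [uIoc_of_le hac]
  · exact hg.aestronglyMeasurable measurableSet_Ioc
  · refine (ae_restrict_iff' measurableSet_Ioc).2 (Eventually.of_forall fun x hx => ?_)
    have hxa : 0 < √(x - a) := sqrt_pos.2 (sub_pos.2 hx.1)
    dsimp only
    rw [norm_eq_abs, rpow_neg (sub_nonneg.2 hx.1.le), ← sqrt_eq_rpow, ← div_eq_mul_inv,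
      le_div_iff₀ hxa]
    exact hC x hx

theorem tendsto_integral_div_sqrt_sub_of_tendsto_mul_sqrt_sub {g : ℝ → ℝ} {a b ℓ : ℝ}
    (hab : a < b) (hg : ContinuousOn g (Ioo a b))
    (hlim : Tendsto (fun x => g x * √(x - a)) (𝓝[>] a) (𝓝 ℓ)) :
    Tendsto (fun r => (∫ x in a..r, g x) / √(r - a)) (𝓝[>] a) (𝓝 (2 * ℓ)) := by
  obtain ⟨c, hac : a < c, hsub⟩ := mem_nhdsGT_iff_exists_Ioc_subset.1
    (inter_mem (Ioo_mem_nhdsGT hab) (hlim.norm.eventually (eventually_le_nhds (lt_add_one ‖ℓ‖))))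
  have hcb : Ioc a c ⊆ Ioo a b := fun x hx => (hsub hx).1
  have hint : IntervalIntegrable g volume a c :=
    intervalIntegrable_of_abs_mul_sqrt_sub_le hac.le (hg.mono hcb) fun x hx => by
      simpa [abs_mul, abs_of_nonneg (sqrt_nonneg _)] using (hsub hx).2
  have hderiv : ∀ r ∈ Ioo a c, HasDerivAt (fun u => ∫ x in a..u, g x) (g r) r := by
    intro r hr
    have hr' : r ∈ Ioo a b := hcb (Ioo_subset_Ioc_self hr)
    refine intervalIntegral.integral_hasDerivAt_right (hint.mono_set ?_)
      (hg.stronglyMeasurableAtFilter isOpen_Ioo r hr') (hg.continuousAt (Ioo_mem_nhds hr'.1 hr'.2))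
    rw [uIcc_of_le hr.1.le, uIcc_of_le hac.le]
    exact Icc_subset_Icc_right hr.2.le
  have hzero : Tendsto (fun u => ∫ x in a..u, g x) (𝓝[>] a) (𝓝 0) := by
    have hprim := intervalIntegral.continuousOn_primitive_interval' hint left_mem_uIcc a
      left_mem_uIcc
    rw [uIcc_of_le hac.le] at hprim
    simpa using (hprim.mono_of_mem_nhdsWithin (Icc_mem_nhdsGT hac)).tendsto
  have hsqrt : ∀ r ∈ Ioo a c, HasDerivAt (fun u => √(u - a)) (1 / (2 * √(r - a))) r :=
    fun r hr => ((hasDerivAt_id r).sub_const a).sqrt (sub_pos.2 hr.1).ne'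
  refine HasDerivAt.lhopital_zero_right_on_Ioo hac hderiv hsqrt
    (fun r hr => by simp [(sqrt_pos.2 (sub_pos.2 hr.1)).ne']) hzero (tendsto_sqrt_sub_nhdsGT a)
    ?_
  refine (hlim.const_mul 2).congr fun r => ?_
  rw [div_div_eq_mul_div, div_one]
  ring

/-- The integrand of `I`. -/
noncomputable def isotropicIntegrand (f : ℝ → ℝ) (x : ℝ) : ℝ := (1 / √(f x) - 1) / x

lemma continuousOn_isotropicIntegrand {f : ℝ → ℝ} {s : Set ℝ} (hf : ContinuousOn f s)
    (hpos : ∀ x ∈ s, 0 < f x) (h0 : ∀ x ∈ s, x ≠ 0) :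
    ContinuousOn (isotropicIntegrand f) s :=
  ((continuousOn_const.div hf.sqrt fun x hx => (sqrt_pos.2 (hpos x hx)).ne').sub
    continuousOn_const).div continuousOn_id h0

lemma tendsto_isotropicIntegrand_mul_sqrt_sub {f : ℝ → ℝ} {a f' : ℝ} (ha : a ≠ 0)
    (hfa : f a = 0) (hf : HasDerivAt f f' a) (hf' : f' ≠ 0) :
    Tendsto (fun x => isotropicIntegrand f x * √(x - a)) (𝓝[>] a) (𝓝 (1 / (a * √f'))) := by
  have hratio : Tendsto (fun x => √(slope f a x)⁻¹) (𝓝[>] a) (𝓝 (√f')⁻¹) := by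
    simpa [sqrt_inv] using (hf.tendsto_slope_nhdsGT.inv₀ hf').sqrt
  have key := (hratio.sub (tendsto_sqrt_sub_nhdsGT a)).div
    (tendsto_id.mono_left nhdsWithin_le_nhds) ha
  convert key.congr' ?_ using 2
  · ring
  filter_upwards [self_mem_nhdsWithin] with x hx
  rw [Pi.div_apply, id, slope_def_field, hfa, sub_zero, inv_div, sqrt_div (sub_pos.2 hx).le,
    isotropicIntegrand]
  ring

/-- Square-root law of the isotropic radius at a simple (nonextremal) horizon:
as r → a⁺, ln(ρ(r)/ρ₊)/√(r − a) → γ = 2/(a√(f'(a))). -/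
theorem isotropic_radius_sqrt_law_at_horizon
    (a b : ℝ) (ha : 0 < a) (hab : a < b) (f : ℝ → ℝ)
    (hcont : ContinuousOn f (Set.Ico a b))
    (hpos : ∀ x ∈ Set.Ioo a b, 0 < f x)
    (hfa : f a = 0)
    (f' : ℝ) (hderiv : HasDerivAt f f' a) (hf' : 0 < f')
    (ρ₀ : ℝ) (hρ₀ : 0 < ρ₀)
    (I ρ : ℝ → ℝ)
    (hI : ∀ r ∈ Set.Ioo a b, I r = ∫ x in a..r, (1 / Real.sqrt (f x) - 1) / x)
    (hρ : ∀ r ∈ Set.Ioo a b, ρ r = ρ₀ * r * Real.exp (I r)) :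
    Tendsto (fun r => Real.log (ρ r / (ρ₀ * a)) / Real.sqrt (r - a))
      (nhdsWithin a (Set.Ioo a b)) (nhds (2 / (a * Real.sqrt f'))) := by
  rw [nhdsWithin_Ioo_eq_nhdsGT hab]
  have hlog : Tendsto (fun r => log (r / a) / √(r - a)) (𝓝[>] a) (𝓝 0) :=
    tendsto_div_sqrt_sub_of_differentiableAt
      ((differentiableAt_id.div_const a).log (by simp [ha.ne'])) (by simp [ha.ne'])
  have hintegral := tendsto_integral_div_sqrt_sub_of_tendsto_mul_sqrt_sub hab
    (continuousOn_isotropicIntegrand (hcont.mono Ioo_subset_Ico_self) hpos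
      fun x hx => (ha.trans hx.1).ne')
    (tendsto_isotropicIntegrand_mul_sqrt_sub ha.ne' hfa hderiv hf'.ne')
  convert (hlog.add hintegral).congr' ?_ using 2
  · ring
  filter_upwards [Ioo_mem_nhdsGT hab] with r hr
  rw [hρ r hr, hI r hr, mul_assoc, mul_div_mul_left _ _ hρ₀.ne', mul_div_right_comm,
    log_mul (div_pos (ha.trans hr.1) ha).ne' (exp_pos _).ne', log_exp, add_div]
  rfl
end

section
/- Let a, b be real numbers with 0 < a < b, let f : ℝ → ℝ be continuous on [a,b) and strictly positive on (a,b), with f(a) = 0, and suppose f is differentiable at a with f'(a) > 0. Fix ρ₀ > 0, define I(r) = ∫_a^r (1/√(f(x)) − 1)/x dx and ρ(r) = ρ₀·r·exp(I(r)) for r ∈ (a,b), and set ρ₊ = ρ₀·a. Then, as r → a from the right, (r − a)/(ρ(r) − ρ₊)² tends to f'(a)/(4ρ₀²). -/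
open MeasureTheory Set Real Filter Topology

/-!
Near the horizon `f x ≈ f'(a) (x - a)`, so the integrand of `I` is of order `(x - a)^(-1/2)`:
it is integrable at `a`, `I → 0` and `ρ → ρ₊`. Since `r I' = 1/√f - 1`, the derivative of
`ρ = ρ₀ r e^I` is `ρ₀ e^I / √f`, and L'Hôpital's rule applied to `(ρ - ρ₊) / √(r - a)` gives the
limit `2 ρ₀ / √(f'(a))`; squaring and inverting yields `f'(a) / (4 ρ₀²)`.
-/

theorem tendsto_div_sub_nhdsGT_of_hasDerivAt {f : ℝ → ℝ} {f' a : ℝ} (hf : HasDerivAt f f' a)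
    (hfa : f a = 0) : Tendsto (fun x => f x / (x - a)) (𝓝[>] a) (𝓝 f') := by
  refine ((hasDerivAt_iff_tendsto_slope.mp hf).mono_left
    (nhdsWithin_mono a fun _ hx => ne_of_gt hx)).congr fun x => ?_
  rw [slope_def_field, hfa, sub_zero]

theorem exists_Ioc_mul_sub_le_of_hasDerivAt {f : ℝ → ℝ} {f' k a b : ℝ} (hf : HasDerivAt f f' a)
    (hfa : f a = 0) (hk : k < f') (hab : a < b) :
    ∃ c ∈ Ioo a b, ∀ x ∈ Ioc a c, k * (x - a) ≤ f x := by
  have hev : ∀ᶠ x in 𝓝[>] a, x < b ∧ k * (x - a) ≤ f x := by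
    filter_upwards [Ioo_mem_nhdsGT hab, self_mem_nhdsWithin,
      (tendsto_div_sub_nhdsGT_of_hasDerivAt hf hfa).eventually (lt_mem_nhds hk)]
      with x hxb (hxa : a < x) hslope
    exact ⟨hxb.2, ((lt_div_iff₀ (sub_pos.2 hxa)).1 hslope).le⟩
  obtain ⟨c, hac, hc⟩ := mem_nhdsGT_iff_exists_Ioc_subset.1 hev
  exact ⟨c, ⟨hac, (hc ⟨hac, le_rfl⟩).1⟩, fun x hx => (hc hx).2⟩

theorem tendsto_sqrt_sub_div_sqrt_of_hasDerivAt {f : ℝ → ℝ} {f' a : ℝ} (hf : HasDerivAt f f' a)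
    (hfa : f a = 0) (hf' : f' ≠ 0) :
    Tendsto (fun x => √(x - a) / √(f x)) (𝓝[>] a) (𝓝 (√f')⁻¹) := by
  rw [← sqrt_inv]
  refine ((tendsto_div_sub_nhdsGT_of_hasDerivAt hf hfa).inv₀ hf').sqrt.congr' ?_
  filter_upwards [self_mem_nhdsWithin] with x (hx : a < x)
  rw [inv_div, sqrt_div (sub_pos.2 hx).le]

theorem intervalIntegrable_one_div_sqrt_of_mul_sub_le {f : ℝ → ℝ} {k a c : ℝ} (hk : 0 < k)
    (hac : a ≤ c) (hf : ContinuousOn f (Ioc a c)) (hlow : ∀ x ∈ Ioc a c, k * (x - a) ≤ f x) :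
    IntervalIntegrable (fun x => 1 / √(f x)) volume a c := by
  have hfpos : ∀ x ∈ Ioc a c, 0 < f x := fun x hx =>
    (mul_pos hk (sub_pos.2 hx.1)).trans_le (hlow x hx)
  have hdom : IntervalIntegrable (fun x => k ^ (-(1 / 2) : ℝ) * (x - a) ^ (-(1 / 2) : ℝ))
      volume a c := by
    refine IntervalIntegrable.const_mul ?_ _
    simpa using (intervalIntegral.intervalIntegrable_rpow' (a := a - a) (b := c - a)
      (r := -(1 / 2)) (by norm_num)).comp_sub_right a
  refine hdom.mono_fun' ?_ ?_ <;> rw [uIoc_of_le hac]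
  · exact (continuousOn_const.div hf.sqrt fun x hx =>
      (sqrt_pos.2 (hfpos x hx)).ne').aestronglyMeasurable measurableSet_Ioc
  · refine (ae_restrict_iff' measurableSet_Ioc).2 (.of_forall fun x hx => ?_)
    calc ‖1 / √(f x)‖ = f x ^ (-(1 / 2) : ℝ) := by
          rw [norm_of_nonneg (by positivity), sqrt_eq_rpow, rpow_neg (hfpos x hx).le, one_div]
      _ ≤ (k * (x - a)) ^ (-(1 / 2) : ℝ) :=
          rpow_le_rpow_of_nonpos (mul_pos hk (sub_pos.2 hx.1)) (hlow x hx) (by norm_num)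
      _ = _ := mul_rpow hk.le (sub_pos.2 hx.1).le

theorem hasDerivAt_of_eqOn_primitive {g I : ℝ → ℝ} {a c x : ℝ}
    (hg : IntervalIntegrable g volume a c) (hcont : ContinuousOn g (Ioo a c))
    (hI : EqOn I (fun r => ∫ t in a..r, g t) (Ioo a c)) (hx : x ∈ Ioo a c) :
    HasDerivAt I (g x) x := by
  have hx_nhds : Ioo a c ∈ 𝓝 x := Ioo_mem_nhds hx.1 hx.2
  refine (intervalIntegral.integral_hasDerivAt_right (a := a) (hg.mono_set ?_)
    (hcont.stronglyMeasurableAtFilter isOpen_Ioo x hx)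
    (hcont.continuousAt hx_nhds)).congr_of_eventuallyEq ?_
  · exact uIcc_subset_uIcc_left (uIcc_of_le (hx.1.le.trans hx.2.le) ▸ ⟨hx.1.le, hx.2.le⟩)
  · filter_upwards [hx_nhds] using hI

theorem tendsto_integral_nhdsGT {g : ℝ → ℝ} {a c : ℝ} (hac : a < c)
    (hg : IntervalIntegrable g volume a c) :
    Tendsto (fun r => ∫ t in a..r, g t) (𝓝[>] a) (𝓝 0) := by
  have hcont := intervalIntegral.continuousWithinAt_primitive (b₀ := a) (b₁ := a) (b₂ := c)
    (measure_singleton a) (by rwa [min_self, max_eq_right hac.le])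
  rw [ContinuousWithinAt, intervalIntegral.integral_same] at hcont
  exact hcont.mono_left (nhdsWithin_Ioo_eq_nhdsGT hac ▸ nhdsWithin_mono a Ioo_subset_Icc_self)

theorem hasDerivAt_const_mul_id_mul_exp {I : ℝ → ℝ} {s x : ℝ} (hI : HasDerivAt I ((s - 1) / x) x)
    (hx : x ≠ 0) (ρ₀ : ℝ) :
    HasDerivAt (fun r => ρ₀ * r * exp (I r)) (ρ₀ * exp (I x) * s) x := by
  refine (((hasDerivAt_id x).const_mul ρ₀).mul hI.exp).congr_deriv ?_
  simp only [id]
  field_simp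
  ring

theorem tendsto_div_sqrt_sub_of_hasDerivAt {φ φ' : ℝ → ℝ} {a c L : ℝ} (hac : a < c)
    (hφ : ∀ x ∈ Ioo a c, HasDerivAt φ (φ' x) x) (hφ0 : Tendsto φ (𝓝[>] a) (𝓝 0))
    (hlim : Tendsto (fun x => 2 * √(x - a) * φ' x) (𝓝[>] a) (𝓝 L)) :
    Tendsto (fun x => φ x / √(x - a)) (𝓝[>] a) (𝓝 L) := by
  refine HasDerivAt.lhopital_zero_right_on_Ioo hac hφ (g' := fun x => 1 / (2 * √(x - a)))
    (fun x hx => ?_) (fun x hx => ?_) hφ0 ?_ (hlim.congr fun x => ?_)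
  · simpa [Function.comp_def] using
      (hasDerivAt_sqrt (sub_pos.2 hx.1).ne').comp x ((hasDerivAt_id x).sub_const a)
  · have := sqrt_pos.2 (sub_pos.2 hx.1)
    positivity
  · simpa [Function.comp_def] using
      ((continuous_sqrt.comp (continuous_sub_right a)).tendsto a).mono_left nhdsWithin_le_nhds
  · rw [div_div_eq_mul_div, div_one]
    ring

theorem tendsto_sub_div_sq_of_tendsto_div_sqrt {φ : ℝ → ℝ} {a L : ℝ} (hL : L ≠ 0)
    (h : Tendsto (fun x => φ x / √(x - a)) (𝓝[>] a) (𝓝 L)) :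
    Tendsto (fun x => (x - a) / φ x ^ 2) (𝓝[>] a) (𝓝 (L ^ 2)⁻¹) := by
  refine (inv_pow L 2 ▸ (h.inv₀ hL).pow 2).congr' ?_
  filter_upwards [self_mem_nhdsWithin] with x (hx : a < x)
  rw [inv_div, div_pow, sq_sqrt (sub_pos.2 hx).le]

theorem exists_intervalIntegrable_one_div_sqrt_sub_one_div {f : ℝ → ℝ} {f' a b : ℝ} (ha : 0 < a)
    (hab : a < b) (hcont : ContinuousOn f (Ico a b)) (hf : HasDerivAt f f' a) (hfa : f a = 0)
    (hf' : 0 < f') :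
    ∃ c ∈ Ioo a b, IntervalIntegrable (fun x => (1 / √(f x) - 1) / x) volume a c ∧
      ContinuousOn (fun x => (1 / √(f x) - 1) / x) (Ioo a c) := by
  obtain ⟨c, ⟨hac, hcb⟩, hlow⟩ :=
    exists_Ioc_mul_sub_le_of_hasDerivAt hf hfa (half_lt_self hf') hab
  have hcont' : ContinuousOn f (Ioc a c) :=
    hcont.mono fun x hx => ⟨hx.1.le, hx.2.trans_lt hcb⟩
  have hfpos (x) (hx : x ∈ Ioo a c) : 0 < f x :=
    (mul_pos (half_pos hf') (sub_pos.2 hx.1)).trans_le (hlow x (Ioo_subset_Ioc_self hx))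
  have hinv : ContinuousOn (fun x : ℝ => x⁻¹) (uIcc a c) := continuousOn_inv₀.mono fun x hx =>
    (ha.trans_le (uIcc_of_le hac.le ▸ hx).1).ne'
  refine ⟨c, ⟨hac, hcb⟩, ?_, ?_⟩
  · simpa only [div_eq_mul_inv] using
      ((intervalIntegrable_one_div_sqrt_of_mul_sub_le (half_pos hf') hac.le hcont' hlow).sub
        intervalIntegrable_const).mul_continuousOn hinv
  · exact ((continuousOn_const.div (hcont'.mono Ioo_subset_Ioc_self).sqrt fun x hx =>
      (sqrt_pos.2 (hfpos x hx)).ne').sub continuousOn_const).div continuousOn_id fun x hx =>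
      (ha.trans hx.1).ne'

theorem tendsto_sub_div_sq_of_eqOn_const_mul_id_mul_exp {s I ρ : ℝ → ℝ} {a c ρ₀ L : ℝ}
    (ha : 0 < a) (hac : a < c) (hI' : ∀ x ∈ Ioo a c, HasDerivAt I ((s x - 1) / x) x)
    (hI0 : Tendsto I (𝓝[>] a) (𝓝 0)) (hρ : EqOn ρ (fun r => ρ₀ * r * exp (I r)) (Ioo a c))
    (hs : Tendsto (fun x => √(x - a) * s x) (𝓝[>] a) (𝓝 L)) (hρ₀ : ρ₀ ≠ 0) (hL : L ≠ 0) :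
    Tendsto (fun r => (r - a) / (ρ r - ρ₀ * a) ^ 2) (𝓝[>] a) (𝓝 ((2 * ρ₀ * L) ^ 2)⁻¹) := by
  have hρ' (x) (hx : x ∈ Ioo a c) :
      HasDerivAt (fun r => ρ r - ρ₀ * a) (ρ₀ * exp (I x) * s x) x := by
    refine ((hasDerivAt_const_mul_id_mul_exp (hI' x hx) (ha.trans hx.1).ne' ρ₀).sub_const
      (ρ₀ * a)).congr_of_eventuallyEq ?_
    filter_upwards [Ioo_mem_nhds hx.1 hx.2] with r hr
    rw [hρ hr]
  have hexp : Tendsto (fun r => exp (I r)) (𝓝[>] a) (𝓝 1) := by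
    simpa [Function.comp_def] using (continuous_exp.tendsto 0).comp hI0
  have hρ0 : Tendsto (fun r => ρ r - ρ₀ * a) (𝓝[>] a) (𝓝 0) := by
    have hlim := (((tendsto_nhdsWithin_of_tendsto_nhds tendsto_id).const_mul ρ₀).mul
      hexp).sub_const (ρ₀ * a)
    rw [mul_one, sub_self] at hlim
    refine hlim.congr' ?_
    filter_upwards [Ioo_mem_nhdsGT hac] with r hr
    rw [hρ hr]
    rfl
  have hlim : Tendsto (fun x => 2 * √(x - a) * (ρ₀ * exp (I x) * s x)) (𝓝[>] a)
      (𝓝 (2 * ρ₀ * L)) := by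
    have h := (hexp.const_mul (2 * ρ₀)).mul hs
    rw [mul_one] at h
    exact h.congr fun x => by ring
  exact tendsto_sub_div_sq_of_tendsto_div_sqrt (mul_ne_zero (mul_ne_zero two_ne_zero hρ₀) hL)
    (tendsto_div_sqrt_sub_of_hasDerivAt hac hρ' hρ0 hlim)

theorem isotropic_inverse_quadratic_at_horizon_general
    (a b : ℝ) (ha : 0 < a) (hab : a < b) (f : ℝ → ℝ)
    (hcont : ContinuousOn f (Set.Ico a b))
    (hfa : f a = 0)
    (f' : ℝ) (hderiv : HasDerivAt f f' a) (hf' : 0 < f')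
    (ρ₀ : ℝ) (hρ₀ : 0 < ρ₀)
    (I ρ : ℝ → ℝ)
    (hI : ∀ r ∈ Set.Ioo a b, I r = ∫ x in a..r, (1 / Real.sqrt (f x) - 1) / x)
    (hρ : ∀ r ∈ Set.Ioo a b, ρ r = ρ₀ * r * Real.exp (I r)) :
    Tendsto (fun r => (r - a) / (ρ r - ρ₀ * a) ^ 2)
      (nhdsWithin a (Set.Ioo a b)) (nhds (f' / (4 * ρ₀ ^ 2))) := by
  rw [nhdsWithin_Ioo_eq_nhdsGT hab]
  obtain ⟨c, ⟨hac, hcb⟩, hg_int, hg_cont⟩ :=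
    exists_intervalIntegrable_one_div_sqrt_sub_one_div ha hab hcont hderiv hfa hf'
  have hI_eq : EqOn I (fun r => ∫ x in a..r, (1 / √(f x) - 1) / x) (Ioo a c) :=
    fun r hr => hI r (Ioo_subset_Ioo_right hcb.le hr)
  have hI0 : Tendsto I (𝓝[>] a) (𝓝 0) :=
    (tendsto_integral_nhdsGT hac hg_int).congr'
      (hI_eq.eventuallyEq_of_mem (Ioo_mem_nhdsGT hac)).symm
  have hI' (x) (hx : x ∈ Ioo a c) := hasDerivAt_of_eqOn_primitive hg_int hg_cont hI_eq hx
  have hrate := tendsto_sqrt_sub_div_sqrt_of_hasDerivAt hderiv hfa hf'.ne'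
  have key := tendsto_sub_div_sq_of_eqOn_const_mul_id_mul_exp ha hac hI' hI0
    (fun r hr => hρ r (Ioo_subset_Ioo_right hcb.le hr)) (by simpa only [mul_one_div] using hrate)
    hρ₀.ne' (inv_ne_zero (sqrt_pos.2 hf').ne')
  convert key using 2
  rw [mul_pow, inv_pow, sq_sqrt hf'.le]
  field_simp
  ring

/-- Quadratic behavior of the inverse isotropic map at a simple (nonextremal) horizon:
as r → a⁺, (r − a)/(ρ(r) − ρ₊)² → f'(a)/(4ρ₀²). -/
theorem isotropic_inverse_quadratic_at_horizon
    (a b : ℝ) (ha : 0 < a) (hab : a < b) (f : ℝ → ℝ)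
    (hcont : ContinuousOn f (Set.Ico a b))
    (hpos : ∀ x ∈ Set.Ioo a b, 0 < f x)
    (hfa : f a = 0)
    (f' : ℝ) (hderiv : HasDerivAt f f' a) (hf' : 0 < f')
    (ρ₀ : ℝ) (hρ₀ : 0 < ρ₀)
    (I ρ : ℝ → ℝ)
    (hI : ∀ r ∈ Set.Ioo a b, I r = ∫ x in a..r, (1 / Real.sqrt (f x) - 1) / x)
    (hρ : ∀ r ∈ Set.Ioo a b, ρ r = ρ₀ * r * Real.exp (I r)) :
    Tendsto (fun r => (r - a) / (ρ r - ρ₀ * a) ^ 2)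
      (nhdsWithin a (Set.Ioo a b)) (nhds (f' / (4 * ρ₀ ^ 2))) :=
  isotropic_inverse_quadratic_at_horizon_general a b ha hab f hcont hfa f' hderiv hf' ρ₀ hρ₀ I ρ hI
    hρ
end

section
/- Let Λ > 0 and let r₃ < 0 < r₂ < r₁ be real numbers. Define f(r) = −(Λ/(3r))·(r − r₁)·(r − r₂)·(r − r₃), the elliptic modulus k by k² = (−r₃·(r₁ − r₂))/(r₁·(r₂ − r₃)), the amplitude φ(r) = arcsin(√(r₁·(r − r₂)/(r·(r₁ − r₂)))), the constant C_Λ = 2·√(3/Λ)/√(r₁·(r₂ − r₃)), and F(φ) = ∫_0^φ (1 − k²·sin²θ)^{−1/2} dθ. Then 0 < k² < 1, f(r) > 0 for all r ∈ (r₂, r₁), and for every r ∈ (r₂, r₁) the function r ↦ C_Λ·F(φ(r)) has derivative 1/(r·√(f(r))) at r. -/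
open MeasureTheory Set Real

/-!
Put `u = sin² φ = r₁ (r - r₂) / (r (r₁ - r₂))`. Then `1 - u = r₂ (r₁ - r) / (r (r₁ - r₂))` and
`1 - k² u = r₂ (r - r₃) / (r (r₂ - r₃))`, so each of `u`, `1 - u`, `1 - k² u` carries one linear
factor of `f` and `u (1 - u) (1 - k² u) = 3 r₁ r₂² f(r) / (Λ r² (r₁ - r₂)² (r₂ - r₃))`. With
`u' = r₁ r₂ / (r² (r₁ - r₂))`, the chain rule `(C_Λ F ∘ φ)' = C_Λ u' / (2 √(u (1 - u) (1 - k² u)))`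
collapses to `1 / (r √f)`; both sides being positive, it suffices to compare their squares.
-/

theorem HasDerivAt.arcsin_sqrt {g : ℝ → ℝ} {g' x : ℝ} (hg : HasDerivAt g g' x)
    (h0 : 0 < g x) (h1 : g x < 1) :
    HasDerivAt (fun s => arcsin √(g s)) (1 / √(1 - g x) * (g' / (2 * √(g x)))) x := by
  have hsqrt_lt_one : √(g x) < 1 := by simpa using sqrt_lt_sqrt h0.le h1
  have harcsin := hasDerivAt_arcsin (by linarith [sqrt_nonneg (g x)]) hsqrt_lt_one.ne
  rw [sq_sqrt h0.le] at harcsin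
  exact harcsin.comp x (hg.sqrt h0.ne')

theorem one_sub_mul_sin_sq_pos {k : ℝ} (hk : k < 1) (θ : ℝ) : 0 < 1 - k * sin θ ^ 2 := by
  rcases le_or_gt k 0 with hk0 | hk0
  · nlinarith [sq_nonneg (sin θ)]
  · nlinarith [mul_le_mul_of_nonneg_left (sin_sq_le_one θ) hk0.le]

theorem continuous_one_div_sqrt_one_sub_mul_sin_sq {k : ℝ} (hk : k < 1) :
    Continuous fun θ => 1 / √(1 - k * sin θ ^ 2) :=
  continuous_const.div (by fun_prop) fun θ => (sqrt_pos.2 (one_sub_mul_sin_sq_pos hk θ)).ne'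

theorem sin_arcsin_sqrt_sq {u : ℝ} (h0 : 0 ≤ u) (h1 : u ≤ 1) : sin (arcsin √u) ^ 2 = u := by
  rw [sin_arcsin (by linarith [sqrt_nonneg u]) (sqrt_le_one.2 h1), sq_sqrt h0]

noncomputable def kottlerMetric (Λ r₁ r₂ r₃ r : ℝ) : ℝ :=
  -(Λ / (3 * r)) * (r - r₁) * (r - r₂) * (r - r₃)

noncomputable def kottlerModulusSq (r₁ r₂ r₃ : ℝ) : ℝ := -r₃ * (r₁ - r₂) / (r₁ * (r₂ - r₃))

/-- `sin² φ(r)` for the amplitude `φ` of the Köttler isotropic radius. -/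
noncomputable def kottlerSinSq (r₁ r₂ r : ℝ) : ℝ := r₁ * (r - r₂) / (r * (r₁ - r₂))

section Kottler

variable {Λ r₁ r₂ r₃ r : ℝ}

theorem kottlerModulusSq_pos (h3 : r₃ < 0) (h2 : 0 < r₂) (h21 : r₂ < r₁) :
    0 < kottlerModulusSq r₁ r₂ r₃ :=
  div_pos (mul_pos (by linarith) (by linarith)) (mul_pos (by linarith) (by linarith))

theorem kottlerModulusSq_lt_one (h3 : r₃ < 0) (h2 : 0 < r₂) (h21 : r₂ < r₁) :
    kottlerModulusSq r₁ r₂ r₃ < 1 := by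
  rw [kottlerModulusSq, div_lt_one (mul_pos (by linarith) (by linarith))]
  nlinarith

theorem kottlerMetric_eq :
    kottlerMetric Λ r₁ r₂ r₃ r = Λ / (3 * r) * ((r₁ - r) * (r - r₂) * (r - r₃)) := by
  rw [kottlerMetric]
  ring

theorem kottlerMetric_pos (hΛ : 0 < Λ) (h3 : r₃ < 0) (h2 : 0 < r₂) (hr : r ∈ Ioo r₂ r₁) :
    0 < kottlerMetric Λ r₁ r₂ r₃ r := by
  obtain ⟨hr₂, hr₁⟩ := hr
  have hr0 : 0 < r := h2.trans hr₂
  rw [kottlerMetric_eq]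
  exact mul_pos (by positivity) (mul_pos (mul_pos (by linarith) (by linarith)) (by linarith))

theorem kottlerSinSq_pos (h2 : 0 < r₂) (hr : r ∈ Ioo r₂ r₁) : 0 < kottlerSinSq r₁ r₂ r := by
  obtain ⟨hr₂, hr₁⟩ := hr
  exact div_pos (mul_pos (by linarith) (by linarith)) (mul_pos (by linarith) (by linarith))

theorem kottlerSinSq_lt_one (h2 : 0 < r₂) (hr : r ∈ Ioo r₂ r₁) : kottlerSinSq r₁ r₂ r < 1 := by
  obtain ⟨hr₂, hr₁⟩ := hr
  rw [kottlerSinSq, div_lt_one (mul_pos (by linarith) (by linarith))]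
  nlinarith

theorem hasDerivAt_kottlerSinSq (hr : r ≠ 0) (h21 : r₂ ≠ r₁) :
    HasDerivAt (kottlerSinSq r₁ r₂) (r₁ * r₂ / (r ^ 2 * (r₁ - r₂))) r := by
  have hden : r * (r₁ - r₂) ≠ 0 := mul_ne_zero hr (sub_ne_zero.2 h21.symm)
  refine ((((hasDerivAt_id' r).sub_const r₂).const_mul r₁).div
    ((hasDerivAt_id' r).mul_const (r₁ - r₂)) hden).congr_deriv ?_
  field_simp
  ring

theorem one_sub_kottlerSinSq (hr : r ≠ 0) (h21 : r₂ ≠ r₁) :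
    1 - kottlerSinSq r₁ r₂ r = r₂ * (r₁ - r) / (r * (r₁ - r₂)) := by
  have : r₁ - r₂ ≠ 0 := sub_ne_zero.2 h21.symm
  rw [kottlerSinSq]
  field_simp
  ring

theorem one_sub_kottlerModulusSq_mul_kottlerSinSq (hr : r ≠ 0) (h1 : r₁ ≠ 0) (h21 : r₂ ≠ r₁)
    (h32 : r₃ ≠ r₂) :
    1 - kottlerModulusSq r₁ r₂ r₃ * kottlerSinSq r₁ r₂ r = r₂ * (r - r₃) / (r * (r₂ - r₃)) := by
  have : r₁ - r₂ ≠ 0 := sub_ne_zero.2 h21.symm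
  have : r₂ - r₃ ≠ 0 := sub_ne_zero.2 h32.symm
  rw [kottlerModulusSq, kottlerSinSq]
  field_simp
  ring

theorem kottler_chain_rule_value (hΛ : 0 < Λ) (h3 : r₃ < 0) (h2 : 0 < r₂) (hr : r ∈ Ioo r₂ r₁) :
    2 * √(3 / Λ) / √(r₁ * (r₂ - r₃)) *
      (1 / √(1 - kottlerModulusSq r₁ r₂ r₃ * kottlerSinSq r₁ r₂ r) *
        (1 / √(1 - kottlerSinSq r₁ r₂ r) *
          (r₁ * r₂ / (r ^ 2 * (r₁ - r₂)) / (2 * √(kottlerSinSq r₁ r₂ r))))) =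
      1 / (r * √(kottlerMetric Λ r₁ r₂ r₃ r)) := by
  have hr0 : 0 < r := h2.trans hr.1
  have h21 : r₂ < r₁ := hr.1.trans hr.2
  have hu0 := kottlerSinSq_pos h2 hr
  have hu1 := kottlerSinSq_lt_one h2 hr
  have hku : 0 < 1 - kottlerModulusSq r₁ r₂ r₃ * kottlerSinSq r₁ r₂ r := by
    nlinarith [kottlerModulusSq_pos h3 h2 h21, kottlerModulusSq_lt_one h3 h2 h21]
  have hf := kottlerMetric_pos hΛ h3 h2 hr
  have h12 : 0 < r₁ - r₂ := sub_pos.2 h21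
  have h1 : 0 < r₁ := h2.trans h21
  refine (sq_eq_sq₀ (by positivity) (by positivity)).1 ?_
  simp only [div_pow, mul_pow, one_pow, sq_sqrt hku.le, sq_sqrt hu0.le, sq_sqrt (sub_pos.2 hu1).le,
    sq_sqrt hf.le, sq_sqrt (by positivity : (0 : ℝ) ≤ 3 / Λ),
    sq_sqrt (mul_pos h1 (by linarith : 0 < r₂ - r₃)).le]
  rw [one_sub_kottlerModulusSq_mul_kottlerSinSq hr0.ne' (by linarith) h21.ne (by linarith),
    one_sub_kottlerSinSq hr0.ne' h21.ne, kottlerSinSq, kottlerMetric_eq]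
  have : r₂ - r₃ ≠ 0 := by linarith
  have : r₁ - r ≠ 0 := by linarith [hr.2]
  have : r - r₂ ≠ 0 := by linarith [hr.1]
  have : r - r₃ ≠ 0 := by linarith [hr.1]
  field_simp

end Kottler

/-- Köttler (Schwarzschild–de Sitter) metric in the static region (r₂, r₁):
the elliptic modulus satisfies 0 < k² < 1, f > 0 on (r₂, r₁), and the function
r ↦ C_Λ F(φ(r)) has derivative 1/(r√(f r)) at every r ∈ (r₂, r₁). -/
theorem kottler_elliptic_derivative
    (Λ r₁ r₂ r₃ : ℝ) (hΛ : 0 < Λ) (h3 : r₃ < 0) (h2 : 0 < r₂) (h21 : r₂ < r₁)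
    (f : ℝ → ℝ)
    (hf : ∀ r, f r = -(Λ / (3 * r)) * (r - r₁) * (r - r₂) * (r - r₃))
    (k2 : ℝ) (hk2 : k2 = (-r₃ * (r₁ - r₂)) / (r₁ * (r₂ - r₃)))
    (φ : ℝ → ℝ)
    (hφ : ∀ r, φ r = Real.arcsin (Real.sqrt (r₁ * (r - r₂) / (r * (r₁ - r₂)))))
    (CΛ : ℝ) (hCΛ : CΛ = 2 * Real.sqrt (3 / Λ) / Real.sqrt (r₁ * (r₂ - r₃)))
    (F : ℝ → ℝ)
    (hF : ∀ φ₀ : ℝ, F φ₀ = ∫ θ in (0:ℝ)..φ₀, 1 / Real.sqrt (1 - k2 * Real.sin θ ^ 2)) :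
    (0 < k2 ∧ k2 < 1) ∧ (∀ r ∈ Set.Ioo r₂ r₁, 0 < f r) ∧
      ∀ r ∈ Set.Ioo r₂ r₁,
        HasDerivAt (fun s => CΛ * F (φ s)) (1 / (r * Real.sqrt (f r))) r := by
  subst hk2 hCΛ
  obtain rfl : f = kottlerMetric Λ r₁ r₂ r₃ := funext hf
  obtain rfl : φ = fun s => arcsin √(kottlerSinSq r₁ r₂ s) := funext hφ
  obtain rfl : F = fun x => ∫ θ in (0 : ℝ)..x, 1 / √(1 - kottlerModulusSq r₁ r₂ r₃ * sin θ ^ 2) :=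
    funext hF
  have hk := kottlerModulusSq_lt_one h3 h2 h21
  refine ⟨⟨kottlerModulusSq_pos h3 h2 h21, hk⟩, fun r hr => kottlerMetric_pos hΛ h3 h2 hr,
    fun r hr => ?_⟩
  have hu0 := kottlerSinSq_pos h2 hr
  have hu1 := kottlerSinSq_lt_one h2 hr
  have hφ' := (hasDerivAt_kottlerSinSq (h2.trans hr.1).ne' h21.ne).arcsin_sqrt hu0 hu1
  have hF' := ((continuous_one_div_sqrt_one_sub_mul_sin_sq hk).integral_hasStrictDerivAt 0
    (arcsin √(kottlerSinSq r₁ r₂ r))).hasDerivAt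
  rw [sin_arcsin_sqrt_sq hu0.le hu1.le] at hF'
  exact ((hF'.comp r hφ').const_mul _).congr_deriv (kottler_chain_rule_value hΛ h3 h2 hr)
end
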